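/- arXiv:2509.13653 — 2 statements merged into one kernel-verified Lean document; each statement's English description precedes it below -/
import Mathlib

section
/- Let (x̂, ŷ) be the saddle point of the SCCP with weight μ > 0 and reference σ^r. Consider the RTRM dynamics: initialize x¹ ∈ Δ^n, y¹ ∈ Δ^m arbitrarily and cumulative regrets R_x⁰ = 0 ∈ ℝ^n, R_y⁰ = 0 ∈ ℝ^m; for t ≥ 1 set ℓ_x^t = −U y^t + μ(x^t − x^r), ℓ_y^t = Uᵀ x^t + μ(y^t − y^r), r_x^t = ⟨ℓ_x^t, x^t⟩·𝟏 − ℓ_x^t, r_y^t = ⟨ℓ_y^t, y^t⟩·𝟏 − ℓ_y^t, R_x^t = R_x^{t−1} + r_x^t, R_y^t = R_y^{t−1} + r_y^t, and x^{t+1} = [R_x^t]_+/‖[R_x^t]_+‖₁ if ‖[R_x^t]_+‖₁ > 0 and x^{t+1} = (1/n)·𝟏 otherwise (analogously for y^{t+1}). Then there exists a constant C > 0, depending only on U, μ, σ^r and the initialization, such that for every T ≥ 1 there exists some t with 1 ≤ t ≤ T and ‖(x̂, ŷ) − (x^t, y^t)‖₂ ≤ C/√T. -/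
open Finset

/-- Squared Euclidean norm of a vector. -/
noncomputable def sqnorm {k : ℕ} (v : Fin k → ℝ) : ℝ := ∑ i, (v i) ^ 2

/-- Euclidean norm of a concatenated profile vector in ℝ^(k+l). -/
noncomputable def pnorm {k l : ℕ} (v : Fin k → ℝ) (w : Fin l → ℝ) : ℝ :=
  Real.sqrt (sqnorm v + sqnorm w)

/-- Bilinear payoff xᵀUy. -/
def payoff {k l : ℕ} (U : Matrix (Fin k) (Fin l) ℝ) (x : Fin k → ℝ) (y : Fin l → ℝ) : ℝ :=
  ∑ i, ∑ j, x i * U i j * y j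

/-- Regularized SCCP objective G(x,y) = -xᵀUy + μ/2 ‖x - xʳ‖² - μ/2 ‖y - yʳ‖². -/
noncomputable def sccpObj {k l : ℕ} (U : Matrix (Fin k) (Fin l) ℝ) (μ : ℝ)
    (xr : Fin k → ℝ) (yr : Fin l → ℝ) (x : Fin k → ℝ) (y : Fin l → ℝ) : ℝ :=
  -(payoff U x y) + μ / 2 * sqnorm (x - xr) - μ / 2 * sqnorm (y - yr)

/-- (x̂, ŷ) is a saddle point of the SCCP with weight μ and reference (xr, yr). -/
def IsSaddle {k l : ℕ} (U : Matrix (Fin k) (Fin l) ℝ) (μ : ℝ)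
    (xr : Fin k → ℝ) (yr : Fin l → ℝ) (xh : Fin k → ℝ) (yh : Fin l → ℝ) : Prop :=
  xh ∈ stdSimplex ℝ (Fin k) ∧ yh ∈ stdSimplex ℝ (Fin l) ∧
  (∀ y ∈ stdSimplex ℝ (Fin l), sccpObj U μ xr yr xh y ≤ sccpObj U μ xr yr xh yh) ∧
  (∀ x ∈ stdSimplex ℝ (Fin k), sccpObj U μ xr yr xh yh ≤ sccpObj U μ xr yr x yh)

/-- (x*, y*) is a Nash equilibrium of the zero-sum game with payoff matrix U. -/
def IsNash {k l : ℕ} (U : Matrix (Fin k) (Fin l) ℝ)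
    (xs : Fin k → ℝ) (ys : Fin l → ℝ) : Prop :=
  xs ∈ stdSimplex ℝ (Fin k) ∧ ys ∈ stdSimplex ℝ (Fin l) ∧
  (∀ x ∈ stdSimplex ℝ (Fin k), payoff U x ys ≤ payoff U xs ys) ∧
  (∀ y ∈ stdSimplex ℝ (Fin l), payoff U xs ys ≤ payoff U xs y)

/-- Exploitability ε(σ) = max_{x'} x'ᵀUy - min_{y'} xᵀUy'. -/
noncomputable def exploit {k l : ℕ} (U : Matrix (Fin k) (Fin l) ℝ)
    (x : Fin k → ℝ) (y : Fin l → ℝ) : ℝ :=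
  sSup ((fun x' => payoff U x' y) '' stdSimplex ℝ (Fin k)) -
  sInf ((fun y' => payoff U x y') '' stdSimplex ℝ (Fin l))

/-- Transformed loss for the x-player: ℓ_x = -Uy + μ(x - xʳ). -/
noncomputable def lossX {k l : ℕ} (U : Matrix (Fin k) (Fin l) ℝ) (μ : ℝ)
    (xr : Fin k → ℝ) (x : Fin k → ℝ) (y : Fin l → ℝ) : Fin k → ℝ :=
  fun i => -(∑ j, U i j * y j) + μ * (x i - xr i)

/-- Transformed loss for the y-player: ℓ_y = Uᵀx + μ(y - yʳ). -/
noncomputable def lossY {k l : ℕ} (U : Matrix (Fin k) (Fin l) ℝ) (μ : ℝ)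
    (yr : Fin l → ℝ) (x : Fin k → ℝ) (y : Fin l → ℝ) : Fin l → ℝ :=
  fun j => (∑ i, U i j * x i) + μ * (y j - yr j)

/-- Immediate regret r = ⟨ℓ, p⟩·𝟏 - ℓ. -/
noncomputable def imRegret {k : ℕ} (ℓ : Fin k → ℝ) (p : Fin k → ℝ) : Fin k → ℝ :=
  fun i => (∑ i', ℓ i' * p i') - ℓ i


/- ===================== auxiliary lemmas for the proof ===================== -/

section RTRMAux

lemma rtrm_simplex_nonneg {k : ℕ} {p : Fin k → ℝ} (hp : p ∈ stdSimplex ℝ (Fin k)) (i : Fin k) :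
    0 ≤ p i := hp.1 i

lemma rtrm_simplex_sum {k : ℕ} {p : Fin k → ℝ} (hp : p ∈ stdSimplex ℝ (Fin k)) :
    ∑ i, p i = 1 := hp.2

lemma rtrm_simplex_le_one {k : ℕ} {p : Fin k → ℝ} (hp : p ∈ stdSimplex ℝ (Fin k)) (i : Fin k) :
    p i ≤ 1 := by
  have h := hp.2
  have := Finset.single_le_sum (f := p) (fun j _ => hp.1 j) (Finset.mem_univ i)
  linarith

lemma rtrm_coordA (R r : ℝ) : max (R + r) 0 ^ 2 ≤ max R 0 ^ 2 + 2 * max R 0 * r + r ^ 2 := by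
  rcases le_or_gt (R + r) 0 with h | h
  · rw [max_eq_right h]
    nlinarith [sq_nonneg (max R 0 + r)]
  · rw [max_eq_left h.le]
    nlinarith [le_max_left R 0, le_max_right R 0]

lemma rtrm_coordB (R r : ℝ) (hR : R ≤ 0) : max (R + r) 0 ^ 2 ≤ max r 0 ^ 2 := by
  have h1 : max (R + r) 0 ≤ max r 0 := max_le_max (by linarith) le_rfl
  have h2 : (0:ℝ) ≤ max (R + r) 0 := le_max_right _ _
  nlinarith

lemma rtrm_teles (f : ℕ → ℝ) (T : ℕ) :
    f T = f 0 + ∑ t ∈ Icc 1 T, (f t - f (t - 1)) := by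
  induction T with
  | zero => simp
  | succ T ih =>
      rw [Finset.sum_Icc_succ_top (by omega : 1 ≤ T + 1)]
      have h : T + 1 - 1 = T := by omega
      rw [h, ← add_assoc, ← ih]
      ring

lemma rtrm_counting (a : ℕ → ℝ) (bad : ℕ → Prop) [DecidablePred bad] (γ B : ℝ)
    (hγ : 0 < γ) (hB : 0 ≤ B) (ha0 : a 0 = 0) (hann : ∀ t, 0 ≤ a t)
    (hstep : ∀ t, 1 ≤ t → (bad t → a t ≤ a (t - 1) + B) ∧
      (¬ bad t → a t ≤ max (a (t - 1) - γ / 2) 0)) (T : ℕ) :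
    ∑ t ∈ Icc 1 T, (if 0 < a (t - 1) then (1 : ℝ) else 0) ≤
      (2 * B / γ + 2) * ∑ t ∈ Icc 1 T, (if bad t then (1 : ℝ) else 0) := by
  obtain ⟨Ψ, hΨdef⟩ : ∃ Ψ : ℕ → ℝ, ∀ t, Ψ t = a t + (γ / 2) * (if 0 < a t then 1 else 0) :=
    ⟨_, fun t => rfl⟩
  have hΨnn : ∀ t, 0 ≤ Ψ t := by
    intro t
    have := hann t
    rw [hΨdef]
    split_ifs <;> nlinarith
  have key : ∀ T, (γ / 2) * (∑ t ∈ Icc 1 T, (if 0 < a (t - 1) then (1 : ℝ) else 0)) + Ψ T ≤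
      (B + γ) * ∑ t ∈ Icc 1 T, (if bad t then (1 : ℝ) else 0) := by
    intro T
    induction T with
    | zero =>
        simp [hΨdef, ha0]
    | succ T ih =>
        rw [Finset.sum_Icc_succ_top (by omega : 1 ≤ T + 1),
            Finset.sum_Icc_succ_top (by omega : 1 ≤ T + 1)]
        have hT1 : T + 1 - 1 = T := by omega
        rw [hT1]
        have hst := hstep (T + 1) (by omega)
        rw [hT1] at hst
        have hinc : γ / 2 * (if 0 < a T then (1:ℝ) else 0) + Ψ (T + 1) ≤
            Ψ T + (B + γ) * (if bad (T + 1) then (1:ℝ) else 0) := by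
          by_cases hb : bad (T + 1)
          · have h1 : a (T + 1) ≤ a T + B := hst.1 hb
            have h2 : Ψ (T + 1) ≤ a T + B + γ / 2 := by
              rw [hΨdef]; split_ifs <;> nlinarith
            have h3 : a T ≤ Ψ T := by rw [hΨdef]; split_ifs <;> nlinarith
            simp only [hb, if_true]
            split_ifs with hp <;> nlinarith
          · have h1 : a (T + 1) ≤ max (a T - γ / 2) 0 := hst.2 hb
            simp only [hb, if_false]
            by_cases hp : 0 < a T
            · have hΨT : Ψ T = a T + γ / 2 := by rw [hΨdef]; rw [if_pos hp]; ring
              have h2 : Ψ (T + 1) ≤ a T := by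
                rw [hΨdef]
                split_ifs with hq
                · have hmax : max (a T - γ / 2) 0 = a T - γ / 2 := by
                    rcases max_cases (a T - γ / 2) (0:ℝ) with ⟨h, _⟩ | ⟨h, h'⟩
                    · exact h
                    · exfalso; rw [h] at h1; linarith
                  rw [hmax] at h1; linarith
                · have : max (a T - γ / 2) 0 ≤ a T := by
                    apply max_le (by linarith) hp.le
                  nlinarith
              simp only [hp, if_true]
              nlinarith
            · have haT : a T = 0 := le_antisymm (not_lt.1 hp) (hann T)
              have h2 : a (T + 1) = 0 := by
                have hmx : max (a T - γ / 2) 0 = 0 := by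
                  rw [haT]; simp; linarith
                have := hann (T + 1); rw [hmx] at h1; linarith
              have hΨ1 : Ψ (T + 1) = 0 := by rw [hΨdef]; rw [h2]; simp
              have hΨ0 : Ψ T = 0 := by rw [hΨdef]; rw [haT]; simp
              simp only [hp, if_false]
              nlinarith
        rw [mul_add, mul_add]
        linarith [ih, hinc]
  have hK := key T
  have hΨT := hΨnn T
  have hfin : (γ / 2) * (∑ t ∈ Icc 1 T, (if 0 < a (t - 1) then (1 : ℝ) else 0)) ≤
      (B + γ) * ∑ t ∈ Icc 1 T, (if bad t then (1 : ℝ) else 0) := by linarith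
  have h2γ : (2 * B / γ + 2) = 2 * (B + γ) / γ := by field_simp
  rw [h2γ, div_mul_eq_mul_div, le_div_iff₀ hγ]
  nlinarith [hfin]

lemma rtrm_update_mem_simplex {k : ℕ} (hk : 0 < k) (R : Fin k → ℝ) :
    (if 0 < ∑ i, max (R i) 0 then (fun i => max (R i) 0 / ∑ i', max (R i') 0)
      else fun _ => 1 / (k : ℝ)) ∈ stdSimplex ℝ (Fin k) := by
  split_ifs with h
  · constructor
    · intro i
      exact div_nonneg (le_max_right _ _) h.le
    · rw [← Finset.sum_div]
      exact div_self (ne_of_gt h)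
  · constructor
    · intro i
      positivity
    · rw [Finset.sum_const]
      simp only [Finset.card_univ, Fintype.card_fin, nsmul_eq_mul]
      rw [mul_one_div]
      exact div_self (by positivity)

lemma rtrm_cross_zero {k : ℕ} (ℓ p R : Fin k → ℝ) (hp : ∑ i, p i = 1)
    (h : ∀ i, max (R i) 0 = (∑ i', max (R i') 0) * p i) :
    ∑ i, max (R i) 0 * imRegret ℓ p i = 0 := by
  simp only [imRegret]
  calc ∑ i, max (R i) 0 * ((∑ i', ℓ i' * p i') - ℓ i)
      = ∑ i, (∑ i', max (R i') 0) * (p i * ((∑ i', ℓ i' * p i') - ℓ i)) := by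
        refine Finset.sum_congr rfl fun i _ => ?_
        rw [h i]; ring
    _ = (∑ i', max (R i') 0) * ∑ i, (p i * (∑ i', ℓ i' * p i') - p i * ℓ i) := by
        rw [← Finset.mul_sum]
        refine congrArg _ (Finset.sum_congr rfl fun i _ => by ring)
    _ = 0 := by
        rw [Finset.sum_sub_distrib, ← Finset.sum_mul, hp]
        have h2 : ∑ i, p i * ℓ i = ∑ i, ℓ i * p i := Finset.sum_congr rfl fun i _ => by ring
        rw [h2]
        ring

lemma rtrm_gradx_identity {k l : ℕ} (U : Matrix (Fin k) (Fin l) ℝ) (μ : ℝ)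
    (xr : Fin k → ℝ) (yr : Fin l → ℝ) (x x' : Fin k → ℝ) (y : Fin l → ℝ) :
    ∑ i, lossX U μ xr x y i * (x i - x' i) =
      sccpObj U μ xr yr x y - sccpObj U μ xr yr x' y + μ / 2 * sqnorm (x' - x) := by
  have hL : ∑ i, lossX U μ xr x y i * (x i - x' i) =
      ∑ i, ((∑ j, (x' i * U i j * y j - x i * U i j * y j))
        + (μ/2*(x i - xr i)^2 - μ/2*(x' i - xr i)^2 + μ/2*(x' i - x i)^2)) := by
    refine Finset.sum_congr rfl fun i _ => ?_
    simp only [lossX]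
    have h1 : (∑ j, U i j * y j) * (x i - x' i)
        = ∑ j, (x i * U i j * y j - x' i * U i j * y j) := by
      rw [Finset.sum_mul]
      exact Finset.sum_congr rfl fun j _ => by ring
    have h2 : ∑ j, (x' i * U i j * y j - x i * U i j * y j)
        = -∑ j, (x i * U i j * y j - x' i * U i j * y j) := by
      rw [← Finset.sum_neg_distrib]
      exact Finset.sum_congr rfl fun j _ => by ring
    rw [h2, ← h1]
    ring
  rw [hL, Finset.sum_add_distrib]
  simp only [sccpObj, payoff, sqnorm, Pi.sub_apply]
  have e1 : ∑ i, ∑ j, (x' i * U i j * y j - x i * U i j * y j)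
      = (∑ i, ∑ j, x' i * U i j * y j) - ∑ i, ∑ j, x i * U i j * y j := by
    rw [← Finset.sum_sub_distrib]
    exact Finset.sum_congr rfl fun i _ => by rw [Finset.sum_sub_distrib]
  have e2 : ∑ i, (μ/2*(x i - xr i)^2 - μ/2*(x' i - xr i)^2 + μ/2*(x' i - x i)^2)
      = μ/2*(∑ i, (x i - xr i)^2) - μ/2*(∑ i, (x' i - xr i)^2) + μ/2*(∑ i, (x' i - x i)^2) := by
    rw [Finset.sum_add_distrib, Finset.sum_sub_distrib, ← Finset.mul_sum, ← Finset.mul_sum,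
        ← Finset.mul_sum]
  rw [e1, e2]
  ring

lemma rtrm_grady_identity {k l : ℕ} (U : Matrix (Fin k) (Fin l) ℝ) (μ : ℝ)
    (xr : Fin k → ℝ) (yr : Fin l → ℝ) (x : Fin k → ℝ) (y y' : Fin l → ℝ) :
    ∑ j, lossY U μ yr x y j * (y j - y' j) =
      sccpObj U μ xr yr x y' - sccpObj U μ xr yr x y + μ / 2 * sqnorm (y' - y) := by
  have hL : ∑ j, lossY U μ yr x y j * (y j - y' j) =
      ∑ j, ((∑ i, (x i * U i j * y j - x i * U i j * y' j))
        + (μ/2*(y j - yr j)^2 - μ/2*(y' j - yr j)^2 + μ/2*(y' j - y j)^2)) := by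
    refine Finset.sum_congr rfl fun j _ => ?_
    simp only [lossY]
    have h1 : (∑ i, U i j * x i) * (y j - y' j)
        = ∑ i, (x i * U i j * y j - x i * U i j * y' j) := by
      rw [Finset.sum_mul]
      exact Finset.sum_congr rfl fun i _ => by ring
    rw [← h1]
    ring
  rw [hL, Finset.sum_add_distrib]
  simp only [sccpObj, payoff, sqnorm, Pi.sub_apply]
  have e1 : ∑ j, ∑ i, (x i * U i j * y j - x i * U i j * y' j)
      = (∑ i, ∑ j, x i * U i j * y j) - ∑ i, ∑ j, x i * U i j * y' j := by
    rw [Finset.sum_comm, ← Finset.sum_sub_distrib]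
    exact Finset.sum_congr rfl fun i _ => by rw [Finset.sum_sub_distrib]
  have e2 : ∑ j, (μ/2*(y j - yr j)^2 - μ/2*(y' j - yr j)^2 + μ/2*(y' j - y j)^2)
      = μ/2*(∑ j, (y j - yr j)^2) - μ/2*(∑ j, (y' j - yr j)^2) + μ/2*(∑ j, (y' j - y j)^2) := by
    rw [Finset.sum_add_distrib, Finset.sum_sub_distrib, ← Finset.mul_sum, ← Finset.mul_sum,
        ← Finset.mul_sum]
  rw [e1, e2]
  ring

end RTRMAux


section RTRMAux2

lemma rtrm_sc_step {k l : ℕ} (U : Matrix (Fin k) (Fin l) ℝ) (μ : ℝ)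
    (xr : Fin k → ℝ) (yr : Fin l → ℝ) (xh : Fin k → ℝ) (yh : Fin l → ℝ)
    (hsad : IsSaddle U μ xr yr xh yh)
    (x : Fin k → ℝ) (y : Fin l → ℝ)
    (hx : x ∈ stdSimplex ℝ (Fin k)) (hy : y ∈ stdSimplex ℝ (Fin l)) :
    μ / 2 * (sqnorm (xh - x) + sqnorm (yh - y)) ≤
      (∑ i, lossX U μ xr x y i * (x i - xh i)) + ∑ j, lossY U μ yr x y j * (y j - yh j) := by
  have h1 := rtrm_gradx_identity U μ xr yr x xh y
  have h2 := rtrm_grady_identity U μ xr yr x y yh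
  have s1 : sccpObj U μ xr yr xh y ≤ sccpObj U μ xr yr xh yh := hsad.2.2.1 y hy
  have s2 : sccpObj U μ xr yr xh yh ≤ sccpObj U μ xr yr x yh := hsad.2.2.2 x hx
  linarith

lemma rtrm_vertex_mix_mem {k : ℕ} (p : Fin k → ℝ) (hp : p ∈ stdSimplex ℝ (Fin k))
    (i : Fin k) (s : ℝ) (hs0 : 0 ≤ s) (hs1 : s ≤ 1) :
    (fun j => p j + s * ((if j = i then (1:ℝ) else 0) - p j)) ∈ stdSimplex ℝ (Fin k) := by
  constructor
  · intro j
    have h0 := hp.1 j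
    have h1 : (0:ℝ) ≤ (if j = i then (1:ℝ) else 0) := by split_ifs <;> norm_num
    dsimp only
    nlinarith [mul_nonneg (by linarith : (0:ℝ) ≤ 1 - s) h0, mul_nonneg hs0 h1]
  · have : ∑ j, (p j + s * ((if j = i then (1:ℝ) else 0) - p j))
        = (∑ j, p j) + s * ((∑ j, (if j = i then (1:ℝ) else 0)) - ∑ j, p j) := by
      rw [Finset.sum_add_distrib, ← Finset.mul_sum, Finset.sum_sub_distrib]
    rw [this, hp.2, Finset.sum_ite_eq' Finset.univ i (fun _ => (1:ℝ))]
    simp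

lemma rtrm_kktX {k l : ℕ} (U : Matrix (Fin k) (Fin l) ℝ) (μ : ℝ) (hμ : 0 < μ)
    (xr : Fin k → ℝ) (yr : Fin l → ℝ) (xh : Fin k → ℝ) (yh : Fin l → ℝ)
    (hsad : IsSaddle U μ xr yr xh yh) (i : Fin k) :
    imRegret (lossX U μ xr xh yh) xh i ≤ 0 := by
  by_contra hcon
  push_neg at hcon
  set rh := imRegret (lossX U μ xr xh yh) xh i with hrh
  set s : ℝ := min 1 (rh / (2 * μ)) with hs
  have hs0 : 0 < s := by
    apply lt_min one_pos
    exact div_pos hcon (by positivity)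
  have hs1 : s ≤ 1 := min_le_left _ _
  set z : Fin k → ℝ := fun j => xh j + s * ((if j = i then (1:ℝ) else 0) - xh j) with hz
  have hzmem : z ∈ stdSimplex ℝ (Fin k) := rtrm_vertex_mix_mem xh hsad.1 i s hs0.le hs1
  have hid := rtrm_gradx_identity U μ xr yr xh z yh
  have hsad2 : sccpObj U μ xr yr xh yh ≤ sccpObj U μ xr yr z yh := hsad.2.2.2 z hzmem
  have hsum : ∑ j, lossX U μ xr xh yh j * (xh j - z j) = s * rh := by
    have : ∀ j, lossX U μ xr xh yh j * (xh j - z j)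
        = s * (lossX U μ xr xh yh j * xh j) - s * (lossX U μ xr xh yh j * (if j = i then (1:ℝ) else 0)) := by
      intro j; simp only [hz]; ring
    rw [Finset.sum_congr rfl fun j _ => this j, Finset.sum_sub_distrib, ← Finset.mul_sum,
        ← Finset.mul_sum]
    have he : ∑ j, lossX U μ xr xh yh j * (if j = i then (1:ℝ) else 0) = lossX U μ xr xh yh i := by
      rw [Finset.sum_congr rfl (fun j _ => by rw [mul_ite, mul_one, mul_zero]),
          Finset.sum_ite_eq' Finset.univ i (fun j => lossX U μ xr xh yh j)]
      simp
    rw [he, hrh]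
    simp only [imRegret]
    ring
  have hnorm : sqnorm (z - xh) ≤ s ^ 2 * 2 := by
    have : ∀ j, ((z - xh) j) ^ 2 = s^2 * ((if j = i then (1:ℝ) else 0) - xh j)^2 := by
      intro j; simp only [hz, Pi.sub_apply]; ring
    rw [sqnorm, Finset.sum_congr rfl fun j _ => this j, ← Finset.mul_sum]
    have hb : ∑ j, ((if j = i then (1:ℝ) else 0) - xh j)^2 ≤ 2 := by
      have hexp : ∀ j, ((if j = i then (1:ℝ) else 0) - xh j)^2
          = (if j = i then (1:ℝ) else 0)^2 - 2*(if j = i then (1:ℝ) else 0)*xh j + xh j^2 := by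
        intro j; ring
      rw [Finset.sum_congr rfl fun j _ => hexp j, Finset.sum_add_distrib, Finset.sum_sub_distrib]
      have e1 : ∑ j, (if j = i then (1:ℝ) else 0)^2 = 1 := by
        have hsq : ∀ j : Fin k, (if j = i then (1:ℝ) else 0)^2 = (if j = i then (1:ℝ) else 0) := by
          intro j; split_ifs <;> norm_num
        rw [Finset.sum_congr rfl fun j _ => hsq j,
            Finset.sum_ite_eq' Finset.univ i (fun _ => (1:ℝ))]
        simp
      have e2 : 0 ≤ ∑ j, 2*(if j = i then (1:ℝ) else 0)*xh j := by
        apply Finset.sum_nonneg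
        intro j _
        have := hsad.1.1 j
        split_ifs <;> nlinarith
      have e3 : ∑ j, xh j ^2 ≤ 1 := by
        calc ∑ j, xh j ^2 ≤ ∑ j, xh j := by
              apply Finset.sum_le_sum
              intro j _
              have h0 := hsad.1.1 j
              have h1 := rtrm_simplex_le_one hsad.1 j
              nlinarith
          _ = 1 := hsad.1.2
      linarith
    nlinarith [sq_nonneg s]
  have hfinal : s * rh ≤ μ / 2 * (s^2 * 2) := by
    rw [hsum] at hid
    calc s * rh = sccpObj U μ xr yr xh yh - sccpObj U μ xr yr z yh + μ / 2 * sqnorm (z - xh) := hid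
      _ ≤ μ / 2 * sqnorm (z - xh) := by linarith
      _ ≤ μ / 2 * (s^2 * 2) := by
          apply mul_le_mul_of_nonneg_left hnorm (by positivity)
  have hsle : s ≤ rh / (2 * μ) := min_le_right _ _
  have hμs : μ * s ≤ rh / 2 := by
    have h1 := mul_le_mul_of_nonneg_left hsle hμ.le
    have h2 : μ * (rh / (2 * μ)) = rh / 2 := by field_simp
    linarith
  have h3 : μ * s * s ≤ rh / 2 * s := mul_le_mul_of_nonneg_right hμs hs0.le
  nlinarith [mul_pos hs0 hcon]
lemma rtrm_kktY {k l : ℕ} (U : Matrix (Fin k) (Fin l) ℝ) (μ : ℝ) (hμ : 0 < μ)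
    (xr : Fin k → ℝ) (yr : Fin l → ℝ) (xh : Fin k → ℝ) (yh : Fin l → ℝ)
    (hsad : IsSaddle U μ xr yr xh yh) (i : Fin l) :
    imRegret (lossY U μ yr xh yh) yh i ≤ 0 := by
  by_contra hcon
  push_neg at hcon
  set rh := imRegret (lossY U μ yr xh yh) yh i with hrh
  set s : ℝ := min 1 (rh / (2 * μ)) with hs
  have hs0 : 0 < s := by
    apply lt_min one_pos
    exact div_pos hcon (by positivity)
  have hs1 : s ≤ 1 := min_le_left _ _
  set z : Fin l → ℝ := fun j => yh j + s * ((if j = i then (1:ℝ) else 0) - yh j) with hz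
  have hzmem : z ∈ stdSimplex ℝ (Fin l) := rtrm_vertex_mix_mem yh hsad.2.1 i s hs0.le hs1
  have hid := rtrm_grady_identity U μ xr yr xh yh z
  have hsad2 : sccpObj U μ xr yr xh z ≤ sccpObj U μ xr yr xh yh := hsad.2.2.1 z hzmem
  have hsum : ∑ j, lossY U μ yr xh yh j * (yh j - z j) = s * rh := by
    have hterm : ∀ j, lossY U μ yr xh yh j * (yh j - z j)
        = s * (lossY U μ yr xh yh j * yh j) - s * (lossY U μ yr xh yh j * (if j = i then (1:ℝ) else 0)) := by
      intro j; simp only [hz]; ring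
    rw [Finset.sum_congr rfl fun j _ => hterm j, Finset.sum_sub_distrib, ← Finset.mul_sum,
        ← Finset.mul_sum]
    have he : ∑ j, lossY U μ yr xh yh j * (if j = i then (1:ℝ) else 0) = lossY U μ yr xh yh i := by
      rw [Finset.sum_congr rfl (fun j _ => by rw [mul_ite, mul_one, mul_zero]),
          Finset.sum_ite_eq' Finset.univ i (fun j => lossY U μ yr xh yh j)]
      simp
    rw [he, hrh]
    simp only [imRegret]
    ring
  have hnorm : sqnorm (z - yh) ≤ s ^ 2 * 2 := by
    have hterm : ∀ j, ((z - yh) j) ^ 2 = s^2 * ((if j = i then (1:ℝ) else 0) - yh j)^2 := by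
      intro j; simp only [hz, Pi.sub_apply]; ring
    rw [sqnorm, Finset.sum_congr rfl fun j _ => hterm j, ← Finset.mul_sum]
    have hb : ∑ j, ((if j = i then (1:ℝ) else 0) - yh j)^2 ≤ 2 := by
      have hexp : ∀ j, ((if j = i then (1:ℝ) else 0) - yh j)^2
          = (if j = i then (1:ℝ) else 0)^2 - 2*(if j = i then (1:ℝ) else 0)*yh j + yh j^2 := by
        intro j; ring
      rw [Finset.sum_congr rfl fun j _ => hexp j, Finset.sum_add_distrib, Finset.sum_sub_distrib]
      have e1 : ∑ j, (if j = i then (1:ℝ) else 0)^2 = 1 := by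
        have hsq : ∀ j : Fin l, (if j = i then (1:ℝ) else 0)^2 = (if j = i then (1:ℝ) else 0) := by
          intro j; split_ifs <;> norm_num
        rw [Finset.sum_congr rfl fun j _ => hsq j,
            Finset.sum_ite_eq' Finset.univ i (fun _ => (1:ℝ))]
        simp
      have e2 : 0 ≤ ∑ j, 2*(if j = i then (1:ℝ) else 0)*yh j := by
        apply Finset.sum_nonneg
        intro j _
        have := hsad.2.1.1 j
        split_ifs <;> nlinarith
      have e3 : ∑ j, yh j ^2 ≤ 1 := by
        calc ∑ j, yh j ^2 ≤ ∑ j, yh j := by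
              apply Finset.sum_le_sum
              intro j _
              have h0 := hsad.2.1.1 j
              have h1 := rtrm_simplex_le_one hsad.2.1 j
              nlinarith
          _ = 1 := hsad.2.1.2
      linarith
    nlinarith [sq_nonneg s]
  have hfinal : s * rh ≤ μ / 2 * (s^2 * 2) := by
    rw [hsum] at hid
    calc s * rh = sccpObj U μ xr yr xh z - sccpObj U μ xr yr xh yh + μ / 2 * sqnorm (z - yh) := hid
      _ ≤ μ / 2 * sqnorm (z - yh) := by linarith
      _ ≤ μ / 2 * (s^2 * 2) := by
          apply mul_le_mul_of_nonneg_left hnorm (by positivity)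
  have hsle : s ≤ rh / (2 * μ) := min_le_right _ _
  have hμs : μ * s ≤ rh / 2 := by
    have h1 := mul_le_mul_of_nonneg_left hsle hμ.le
    have h2 : μ * (rh / (2 * μ)) = rh / 2 := by field_simp
    linarith
  have h3 : μ * s * s ≤ rh / 2 * s := mul_le_mul_of_nonneg_right hμs hs0.le
  nlinarith [mul_pos hs0 hcon]

end RTRMAux2

section RTRMAux3

lemma rtrm_sqnorm_nonneg {k : ℕ} (v : Fin k → ℝ) : 0 ≤ sqnorm v :=
  Finset.sum_nonneg fun i _ => sq_nonneg _

lemma rtrm_coord_le_fst {k l : ℕ} (v : Fin k → ℝ) (w : Fin l → ℝ) (i : Fin k) :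
    |v i| ≤ Real.sqrt (sqnorm v + sqnorm w) := by
  apply Real.abs_le_sqrt
  have h1 : (v i)^2 ≤ sqnorm v :=
    Finset.single_le_sum (f := fun i => (v i)^2) (fun j _ => sq_nonneg _) (Finset.mem_univ i)
  have h2 := rtrm_sqnorm_nonneg w
  linarith

lemma rtrm_coord_le_snd {k l : ℕ} (v : Fin k → ℝ) (w : Fin l → ℝ) (j : Fin l) :
    |w j| ≤ Real.sqrt (sqnorm v + sqnorm w) := by
  apply Real.abs_le_sqrt
  have h1 : (w j)^2 ≤ sqnorm w :=
    Finset.single_le_sum (f := fun j => (w j)^2) (fun j _ => sq_nonneg _) (Finset.mem_univ j)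
  have h2 := rtrm_sqnorm_nonneg v
  linarith

lemma rtrm_rowsum_le {k l : ℕ} (U : Matrix (Fin k) (Fin l) ℝ) (i : Fin k) :
    ∑ j, |U i j| ≤ ∑ i', ∑ j, |U i' j| :=
  Finset.single_le_sum (f := fun i' => ∑ j, |U i' j|)
    (fun i' _ => Finset.sum_nonneg fun j _ => abs_nonneg _) (Finset.mem_univ i)

lemma rtrm_colsum_le {k l : ℕ} (U : Matrix (Fin k) (Fin l) ℝ) (j : Fin l) :
    ∑ i, |U i j| ≤ ∑ i', ∑ j', |U i' j'| := by
  calc ∑ i, |U i j| ≤ ∑ i, ∑ j', |U i j'| := by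
        apply Finset.sum_le_sum
        intro i _
        exact Finset.single_le_sum (f := fun j' => |U i j'|) (fun j' _ => abs_nonneg _)
          (Finset.mem_univ j)
    _ = ∑ i', ∑ j', |U i' j'| := rfl

/-- uniform bound on the transformed loss of the x-player -/
lemma rtrm_lossX_bound {k l : ℕ} (U : Matrix (Fin k) (Fin l) ℝ) (μ : ℝ) (hμ : 0 ≤ μ)
    {xr x : Fin k → ℝ} {y : Fin l → ℝ}
    (hxr : xr ∈ stdSimplex ℝ (Fin k)) (hx : x ∈ stdSimplex ℝ (Fin k))
    (hy : y ∈ stdSimplex ℝ (Fin l)) (i : Fin k) :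
    |lossX U μ xr x y i| ≤ (∑ i', ∑ j', |U i' j'|) + μ := by
  simp only [lossX]
  have h1 : |∑ j, U i j * y j| ≤ ∑ i', ∑ j', |U i' j'| := by
    calc |∑ j, U i j * y j| ≤ ∑ j, |U i j * y j| := Finset.abs_sum_le_sum_abs _ _
      _ ≤ ∑ j, |U i j| := by
          apply Finset.sum_le_sum
          intro j _
          rw [abs_mul]
          have h0 := hy.1 j
          have h1 := rtrm_simplex_le_one hy j
          have := abs_nonneg (U i j)
          calc |U i j| * |y j| ≤ |U i j| * 1 := by
                apply mul_le_mul_of_nonneg_left _ (abs_nonneg _)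
                rw [abs_of_nonneg h0]; exact h1
            _ = |U i j| := mul_one _
      _ ≤ ∑ i', ∑ j', |U i' j'| := rtrm_rowsum_le U i
  have h2 : |μ * (x i - xr i)| ≤ μ := by
    rw [abs_mul, abs_of_nonneg hμ]
    have h0 := hx.1 i
    have h1 := rtrm_simplex_le_one hx i
    have h2 := hxr.1 i
    have h3 := rtrm_simplex_le_one hxr i
    have : |x i - xr i| ≤ 1 := abs_le.2 ⟨by linarith, by linarith⟩
    nlinarith
  calc |-(∑ j, U i j * y j) + μ * (x i - xr i)|
      ≤ |(-(∑ j, U i j * y j))| + |μ * (x i - xr i)| := abs_add_le _ _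
    _ ≤ (∑ i', ∑ j', |U i' j'|) + μ := by rw [abs_neg]; exact add_le_add h1 h2

/-- uniform bound on the transformed loss of the y-player -/
lemma rtrm_lossY_bound {k l : ℕ} (U : Matrix (Fin k) (Fin l) ℝ) (μ : ℝ) (hμ : 0 ≤ μ)
    {yr y : Fin l → ℝ} {x : Fin k → ℝ}
    (hyr : yr ∈ stdSimplex ℝ (Fin l)) (hy : y ∈ stdSimplex ℝ (Fin l))
    (hx : x ∈ stdSimplex ℝ (Fin k)) (j : Fin l) :
    |lossY U μ yr x y j| ≤ (∑ i', ∑ j', |U i' j'|) + μ := by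
  simp only [lossY]
  have h1 : |∑ i, U i j * x i| ≤ ∑ i', ∑ j', |U i' j'| := by
    calc |∑ i, U i j * x i| ≤ ∑ i, |U i j * x i| := Finset.abs_sum_le_sum_abs _ _
      _ ≤ ∑ i, |U i j| := by
          apply Finset.sum_le_sum
          intro i _
          rw [abs_mul]
          have h0 := hx.1 i
          have h1 := rtrm_simplex_le_one hx i
          calc |U i j| * |x i| ≤ |U i j| * 1 := by
                apply mul_le_mul_of_nonneg_left _ (abs_nonneg _)
                rw [abs_of_nonneg h0]; exact h1
            _ = |U i j| := mul_one _
      _ ≤ ∑ i', ∑ j', |U i' j'| := rtrm_colsum_le U j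
  have h2 : |μ * (y j - yr j)| ≤ μ := by
    rw [abs_mul, abs_of_nonneg hμ]
    have h0 := hy.1 j
    have h1 := rtrm_simplex_le_one hy j
    have h2 := hyr.1 j
    have h3 := rtrm_simplex_le_one hyr j
    have : |y j - yr j| ≤ 1 := abs_le.2 ⟨by linarith, by linarith⟩
    nlinarith
  calc |(∑ i, U i j * x i) + μ * (y j - yr j)|
      ≤ |∑ i, U i j * x i| + |μ * (y j - yr j)| := abs_add_le _ _
    _ ≤ (∑ i', ∑ j', |U i' j'|) + μ := add_le_add h1 h2

/-- uniform bound on the immediate regrets -/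
lemma rtrm_imRegret_bound {k : ℕ} (ℓ p : Fin k → ℝ) (hp : p ∈ stdSimplex ℝ (Fin k))
    (B : ℝ) (hB : ∀ i, |ℓ i| ≤ B) (i : Fin k) :
    |imRegret ℓ p i| ≤ 2 * B := by
  have hB0 : 0 ≤ B := le_trans (abs_nonneg _) (hB i)
  simp only [imRegret]
  have h1 : |∑ i', ℓ i' * p i'| ≤ B := by
    calc |∑ i', ℓ i' * p i'| ≤ ∑ i', |ℓ i' * p i'| := Finset.abs_sum_le_sum_abs _ _
      _ ≤ ∑ i', B * p i' := by
          apply Finset.sum_le_sum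
          intro i' _
          rw [abs_mul, abs_of_nonneg (hp.1 i')]
          exact mul_le_mul_of_nonneg_right (hB i') (hp.1 i')
      _ = B := by rw [← Finset.mul_sum, hp.2, mul_one]
  calc |(∑ i', ℓ i' * p i') - ℓ i| ≤ |∑ i', ℓ i' * p i'| + |ℓ i| := abs_sub _ _
    _ ≤ 2 * B := by have := hB i; linarith

end RTRMAux3

section RTRMAux4

/-- Lipschitz bound for the x-player's immediate regret relative to the saddle point. -/
lemma rtrm_lipX {k l : ℕ} (U : Matrix (Fin k) (Fin l) ℝ) (μ : ℝ) (hμ : 0 ≤ μ)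
    {xr x xh : Fin k → ℝ} {y yh : Fin l → ℝ}
    (hxr : xr ∈ stdSimplex ℝ (Fin k)) (hx : x ∈ stdSimplex ℝ (Fin k))
    (hxh : xh ∈ stdSimplex ℝ (Fin k)) (hy : y ∈ stdSimplex ℝ (Fin l))
    (hyh : yh ∈ stdSimplex ℝ (Fin l)) (i : Fin k) :
    |imRegret (lossX U μ xr x y) x i - imRegret (lossX U μ xr xh yh) xh i|
      ≤ ((∑ i', ∑ j', |U i' j'|) + μ) * ((k : ℝ) + 2)
          * Real.sqrt (sqnorm (xh - x) + sqnorm (yh - y)) := by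
  set SU : ℝ := ∑ i', ∑ j', |U i' j'| with hSU
  set d : ℝ := Real.sqrt (sqnorm (xh - x) + sqnorm (yh - y)) with hd
  have hd0 : 0 ≤ d := Real.sqrt_nonneg _
  have hSU0 : 0 ≤ SU := Finset.sum_nonneg fun i' _ => Finset.sum_nonneg fun j' _ => abs_nonneg _
  have hdx : ∀ i' : Fin k, |x i' - xh i'| ≤ d := by
    intro i'
    have := rtrm_coord_le_fst (xh - x) (yh - y) i'
    rw [Pi.sub_apply] at this
    rwa [abs_sub_comm]
  have hdy : ∀ j : Fin l, |y j - yh j| ≤ d := by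
    intro j
    have := rtrm_coord_le_snd (xh - x) (yh - y) j
    rw [Pi.sub_apply] at this
    rwa [abs_sub_comm]
  have hldiff : ∀ i' : Fin k, |lossX U μ xr x y i' - lossX U μ xr xh yh i'| ≤ (SU + μ) * d := by
    intro i'
    have heq : lossX U μ xr x y i' - lossX U μ xr xh yh i'
        = -(∑ j, U i' j * (y j - yh j)) + μ * (x i' - xh i') := by
      simp only [lossX]
      have hsub : ∑ j, U i' j * (y j - yh j)
          = (∑ j, U i' j * y j) - ∑ j, U i' j * yh j := by
        rw [← Finset.sum_sub_distrib]
        exact Finset.sum_congr rfl fun j _ => by ring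
      rw [hsub]
      ring
    rw [heq]
    have h1 : |∑ j, U i' j * (y j - yh j)| ≤ SU * d := by
      calc |∑ j, U i' j * (y j - yh j)| ≤ ∑ j, |U i' j * (y j - yh j)| :=
            Finset.abs_sum_le_sum_abs _ _
        _ ≤ ∑ j, |U i' j| * d := by
            apply Finset.sum_le_sum
            intro j _
            rw [abs_mul]
            exact mul_le_mul_of_nonneg_left (hdy j) (abs_nonneg _)
        _ = (∑ j, |U i' j|) * d := by rw [Finset.sum_mul]
        _ ≤ SU * d := mul_le_mul_of_nonneg_right (rtrm_rowsum_le U i') hd0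
    have h2 : |μ * (x i' - xh i')| ≤ μ * d := by
      rw [abs_mul, abs_of_nonneg hμ]
      exact mul_le_mul_of_nonneg_left (hdx i') hμ
    calc |-(∑ j, U i' j * (y j - yh j)) + μ * (x i' - xh i')|
        ≤ |(-(∑ j, U i' j * (y j - yh j)))| + |μ * (x i' - xh i')| := abs_add_le _ _
      _ ≤ SU * d + μ * d := by rw [abs_neg]; exact add_le_add h1 h2
      _ = (SU + μ) * d := by ring
  have hlh : ∀ i' : Fin k, |lossX U μ xr xh yh i'| ≤ SU + μ := fun i' =>
    rtrm_lossX_bound U μ hμ hxr hxh hyh i'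
  have hsplit : (∑ i', lossX U μ xr x y i' * x i') - ∑ i', lossX U μ xr xh yh i' * xh i'
      = (∑ i', (lossX U μ xr x y i' - lossX U μ xr xh yh i') * x i')
        + ∑ i', lossX U μ xr xh yh i' * (x i' - xh i') := by
    rw [← Finset.sum_add_distrib, ← Finset.sum_sub_distrib]
    exact Finset.sum_congr rfl fun i' _ => by ring
  have hb1 : |∑ i', (lossX U μ xr x y i' - lossX U μ xr xh yh i') * x i'| ≤ (SU + μ) * d := by
    calc |∑ i', (lossX U μ xr x y i' - lossX U μ xr xh yh i') * x i'|
        ≤ ∑ i', |(lossX U μ xr x y i' - lossX U μ xr xh yh i') * x i'| :=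
          Finset.abs_sum_le_sum_abs _ _
      _ ≤ ∑ i', ((SU + μ) * d) * x i' := by
          apply Finset.sum_le_sum
          intro i' _
          rw [abs_mul, abs_of_nonneg (hx.1 i')]
          exact mul_le_mul_of_nonneg_right (hldiff i') (hx.1 i')
      _ = (SU + μ) * d := by rw [← Finset.mul_sum, hx.2, mul_one]
  have hb2 : |∑ i', lossX U μ xr xh yh i' * (x i' - xh i')| ≤ (SU + μ) * ((k:ℝ) * d) := by
    calc |∑ i', lossX U μ xr xh yh i' * (x i' - xh i')|
        ≤ ∑ i', |lossX U μ xr xh yh i' * (x i' - xh i')| := Finset.abs_sum_le_sum_abs _ _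
      _ ≤ ∑ i' : Fin k, (SU + μ) * d := by
          apply Finset.sum_le_sum
          intro i' _
          rw [abs_mul]
          exact mul_le_mul (hlh i') (hdx i') (abs_nonneg _) (by linarith)
      _ = (k:ℝ) * ((SU + μ) * d) := by rw [Finset.sum_const]; simp
      _ = (SU + μ) * ((k:ℝ) * d) := by ring
  have hmain : imRegret (lossX U μ xr x y) x i - imRegret (lossX U μ xr xh yh) xh i
      = ((∑ i', (lossX U μ xr x y i' - lossX U μ xr xh yh i') * x i')
        + ∑ i', lossX U μ xr xh yh i' * (x i' - xh i'))
        - (lossX U μ xr x y i - lossX U μ xr xh yh i) := by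
    simp only [imRegret]
    rw [← hsplit]
    ring
  rw [hmain]
  calc |((∑ i', (lossX U μ xr x y i' - lossX U μ xr xh yh i') * x i')
        + ∑ i', lossX U μ xr xh yh i' * (x i' - xh i'))
        - (lossX U μ xr x y i - lossX U μ xr xh yh i)|
      ≤ |(∑ i', (lossX U μ xr x y i' - lossX U μ xr xh yh i') * x i')
        + ∑ i', lossX U μ xr xh yh i' * (x i' - xh i')|
        + |lossX U μ xr x y i - lossX U μ xr xh yh i| := abs_sub _ _
    _ ≤ (|∑ i', (lossX U μ xr x y i' - lossX U μ xr xh yh i') * x i'|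
        + |∑ i', lossX U μ xr xh yh i' * (x i' - xh i')|)
        + |lossX U μ xr x y i - lossX U μ xr xh yh i| := by
          have := abs_add_le (∑ i', (lossX U μ xr x y i' - lossX U μ xr xh yh i') * x i')
            (∑ i', lossX U μ xr xh yh i' * (x i' - xh i'))
          linarith
    _ ≤ ((SU + μ) * d + (SU + μ) * ((k:ℝ) * d)) + (SU + μ) * d := by
          have := hldiff i
          linarith [hb1, hb2]
    _ = (SU + μ) * ((k : ℝ) + 2) * d := by ring

/-- Lipschitz bound for the y-player's immediate regret relative to the saddle point. -/
lemma rtrm_lipY {k l : ℕ} (U : Matrix (Fin k) (Fin l) ℝ) (μ : ℝ) (hμ : 0 ≤ μ)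
    {yr y yh : Fin l → ℝ} {x xh : Fin k → ℝ}
    (hyr : yr ∈ stdSimplex ℝ (Fin l)) (hy : y ∈ stdSimplex ℝ (Fin l))
    (hyh : yh ∈ stdSimplex ℝ (Fin l)) (hx : x ∈ stdSimplex ℝ (Fin k))
    (hxh : xh ∈ stdSimplex ℝ (Fin k)) (j : Fin l) :
    |imRegret (lossY U μ yr x y) y j - imRegret (lossY U μ yr xh yh) yh j|
      ≤ ((∑ i', ∑ j', |U i' j'|) + μ) * ((l : ℝ) + 2)
          * Real.sqrt (sqnorm (xh - x) + sqnorm (yh - y)) := by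
  set SU : ℝ := ∑ i', ∑ j', |U i' j'| with hSU
  set d : ℝ := Real.sqrt (sqnorm (xh - x) + sqnorm (yh - y)) with hd
  have hd0 : 0 ≤ d := Real.sqrt_nonneg _
  have hSU0 : 0 ≤ SU := Finset.sum_nonneg fun i' _ => Finset.sum_nonneg fun j' _ => abs_nonneg _
  have hdx : ∀ i' : Fin k, |x i' - xh i'| ≤ d := by
    intro i'
    have := rtrm_coord_le_fst (xh - x) (yh - y) i'
    rw [Pi.sub_apply] at this
    rwa [abs_sub_comm]
  have hdy : ∀ j' : Fin l, |y j' - yh j'| ≤ d := by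
    intro j'
    have := rtrm_coord_le_snd (xh - x) (yh - y) j'
    rw [Pi.sub_apply] at this
    rwa [abs_sub_comm]
  have hldiff : ∀ j' : Fin l, |lossY U μ yr x y j' - lossY U μ yr xh yh j'| ≤ (SU + μ) * d := by
    intro j'
    have heq : lossY U μ yr x y j' - lossY U μ yr xh yh j'
        = (∑ i', U i' j' * (x i' - xh i')) + μ * (y j' - yh j') := by
      simp only [lossY]
      have hsub : ∑ i', U i' j' * (x i' - xh i')
          = (∑ i', U i' j' * x i') - ∑ i', U i' j' * xh i' := by
        rw [← Finset.sum_sub_distrib]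
        exact Finset.sum_congr rfl fun i' _ => by ring
      rw [hsub]
      ring
    rw [heq]
    have h1 : |∑ i', U i' j' * (x i' - xh i')| ≤ SU * d := by
      calc |∑ i', U i' j' * (x i' - xh i')| ≤ ∑ i', |U i' j' * (x i' - xh i')| :=
            Finset.abs_sum_le_sum_abs _ _
        _ ≤ ∑ i', |U i' j'| * d := by
            apply Finset.sum_le_sum
            intro i' _
            rw [abs_mul]
            exact mul_le_mul_of_nonneg_left (hdx i') (abs_nonneg _)
        _ = (∑ i', |U i' j'|) * d := by rw [Finset.sum_mul]
        _ ≤ SU * d := mul_le_mul_of_nonneg_right (rtrm_colsum_le U j') hd0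
    have h2 : |μ * (y j' - yh j')| ≤ μ * d := by
      rw [abs_mul, abs_of_nonneg hμ]
      exact mul_le_mul_of_nonneg_left (hdy j') hμ
    calc |(∑ i', U i' j' * (x i' - xh i')) + μ * (y j' - yh j')|
        ≤ |∑ i', U i' j' * (x i' - xh i')| + |μ * (y j' - yh j')| := abs_add_le _ _
      _ ≤ SU * d + μ * d := add_le_add h1 h2
      _ = (SU + μ) * d := by ring
  have hlh : ∀ j' : Fin l, |lossY U μ yr xh yh j'| ≤ SU + μ := fun j' =>
    rtrm_lossY_bound U μ hμ hyr hyh hxh j'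
  have hsplit : (∑ j', lossY U μ yr x y j' * y j') - ∑ j', lossY U μ yr xh yh j' * yh j'
      = (∑ j', (lossY U μ yr x y j' - lossY U μ yr xh yh j') * y j')
        + ∑ j', lossY U μ yr xh yh j' * (y j' - yh j') := by
    rw [← Finset.sum_add_distrib, ← Finset.sum_sub_distrib]
    exact Finset.sum_congr rfl fun j' _ => by ring
  have hb1 : |∑ j', (lossY U μ yr x y j' - lossY U μ yr xh yh j') * y j'| ≤ (SU + μ) * d := by
    calc |∑ j', (lossY U μ yr x y j' - lossY U μ yr xh yh j') * y j'|
        ≤ ∑ j', |(lossY U μ yr x y j' - lossY U μ yr xh yh j') * y j'| :=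
          Finset.abs_sum_le_sum_abs _ _
      _ ≤ ∑ j', ((SU + μ) * d) * y j' := by
          apply Finset.sum_le_sum
          intro j' _
          rw [abs_mul, abs_of_nonneg (hy.1 j')]
          exact mul_le_mul_of_nonneg_right (hldiff j') (hy.1 j')
      _ = (SU + μ) * d := by rw [← Finset.mul_sum, hy.2, mul_one]
  have hb2 : |∑ j', lossY U μ yr xh yh j' * (y j' - yh j')| ≤ (SU + μ) * ((l:ℝ) * d) := by
    calc |∑ j', lossY U μ yr xh yh j' * (y j' - yh j')|
        ≤ ∑ j', |lossY U μ yr xh yh j' * (y j' - yh j')| := Finset.abs_sum_le_sum_abs _ _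
      _ ≤ ∑ j' : Fin l, (SU + μ) * d := by
          apply Finset.sum_le_sum
          intro j' _
          rw [abs_mul]
          exact mul_le_mul (hlh j') (hdy j') (abs_nonneg _) (by linarith)
      _ = (l:ℝ) * ((SU + μ) * d) := by rw [Finset.sum_const]; simp
      _ = (SU + μ) * ((l:ℝ) * d) := by ring
  have hmain : imRegret (lossY U μ yr x y) y j - imRegret (lossY U μ yr xh yh) yh j
      = ((∑ j', (lossY U μ yr x y j' - lossY U μ yr xh yh j') * y j')
        + ∑ j', lossY U μ yr xh yh j' * (y j' - yh j'))
        - (lossY U μ yr x y j - lossY U μ yr xh yh j) := by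
    simp only [imRegret]
    rw [← hsplit]
    ring
  rw [hmain]
  calc |((∑ j', (lossY U μ yr x y j' - lossY U μ yr xh yh j') * y j')
        + ∑ j', lossY U μ yr xh yh j' * (y j' - yh j'))
        - (lossY U μ yr x y j - lossY U μ yr xh yh j)|
      ≤ |(∑ j', (lossY U μ yr x y j' - lossY U μ yr xh yh j') * y j')
        + ∑ j', lossY U μ yr xh yh j' * (y j' - yh j')|
        + |lossY U μ yr x y j - lossY U μ yr xh yh j| := abs_sub _ _
    _ ≤ (|∑ j', (lossY U μ yr x y j' - lossY U μ yr xh yh j') * y j'|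
        + |∑ j', lossY U μ yr xh yh j' * (y j' - yh j')|)
        + |lossY U μ yr x y j - lossY U μ yr xh yh j| := by
          have := abs_add_le (∑ j', (lossY U μ yr x y j' - lossY U μ yr xh yh j') * y j')
            (∑ j', lossY U μ yr xh yh j' * (y j' - yh j'))
          linarith
    _ ≤ ((SU + μ) * d + (SU + μ) * ((l:ℝ) * d)) + (SU + μ) * d := by
          have := hldiff j
          linarith [hb1, hb2]
    _ = (SU + μ) * ((l : ℝ) + 2) * d := by ring

end RTRMAux4

section RTRMAux5

/-- Per-player bound on the accumulated positive regrets via strong-convexity margins. -/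
lemma rtrm_player_phi_bound {k : ℕ} (r R : ℕ → Fin k → ℝ) (rh : Fin k → ℝ) (d : ℕ → ℝ)
    (L B : ℝ) (hL : 0 < L) (hB : 0 < B)
    (hR0 : R 0 = 0)
    (hRrec : ∀ t, 1 ≤ t → ∀ i, R t i = R (t-1) i + r t i)
    (hcross : ∀ t, 1 ≤ t → ∑ i, max (R (t-1) i) 0 * r t i = 0)
    (hrh : ∀ i, rh i ≤ 0)
    (hlip : ∀ t, 1 ≤ t → ∀ i, |r t i - rh i| ≤ L * d t)
    (hBb : ∀ t, 1 ≤ t → ∀ i, |r t i| ≤ B)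
    (hd0 : ∀ t, 0 ≤ d t) :
    ∃ CK : ℝ, 0 < CK ∧ ∀ T, ∑ i, max (R T i) 0 ^ 2 ≤ CK * ∑ t ∈ Icc 1 T, d t ^ 2 := by
  classical
  obtain ⟨E, hE⟩ : ∃ E : Fin k → ℕ → ℝ, ∀ i t,
      E i t = max (R t i) 0 ^ 2 - max (R (t-1) i) 0 ^ 2 - 2 * max (R (t-1) i) 0 * r t i :=
    ⟨_, fun i t => rfl⟩
  -- Step 1: the potential is bounded by the sum of excesses
  have hΦsum : ∀ T, ∑ i, max (R T i) 0 ^ 2 = ∑ i, ∑ t ∈ Icc 1 T, E i t := by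
    intro T
    have htel := rtrm_teles (fun t => ∑ i, max (R t i) 0 ^ 2) T
    have hΦ0 : ∑ i, max (R 0 i) 0 ^ 2 = 0 := by
      rw [hR0]; simp
    have hstep : ∀ t ∈ Icc 1 T,
        ((fun t => ∑ i, max (R t i) 0 ^ 2) t - (fun t => ∑ i, max (R t i) 0 ^ 2) (t - 1))
          = ∑ i, E i t := by
      intro t ht
      obtain ⟨ht1, _⟩ := Finset.mem_Icc.1 ht
      have hc := hcross t ht1
      simp only
      rw [← Finset.sum_sub_distrib]
      have hterm : ∀ i, max (R t i) 0 ^ 2 - max (R (t-1) i) 0 ^ 2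
          = E i t + 2 * (max (R (t-1) i) 0 * r t i) := by
        intro i; rw [hE]; ring
      rw [Finset.sum_congr rfl fun i _ => hterm i, Finset.sum_add_distrib, ← Finset.mul_sum, hc]
      ring
    rw [htel, hΦ0, Finset.sum_congr rfl hstep, zero_add, Finset.sum_comm]
  -- basic per-coordinate excess bound
  have hEA : ∀ i, ∀ t, 1 ≤ t → E i t ≤ (r t i) ^ 2 := by
    intro i t ht
    have hR := hRrec t ht i
    have hA := rtrm_coordA (R (t-1) i) (r t i)
    rw [hE, hR]
    linarith
  -- Step 2: per-coordinate bound
  have hcoord : ∀ i : Fin k, ∃ K : ℝ, 0 ≤ K ∧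
      ∀ T, ∑ t ∈ Icc 1 T, E i t ≤ K * ∑ t ∈ Icc 1 T, d t ^ 2 := by
    intro i
    by_cases hm : rh i < 0
    · -- margin coordinate
      obtain ⟨γ, hγdef⟩ : ∃ γ : ℝ, γ = -rh i := ⟨_, rfl⟩
      have hγ : 0 < γ := by rw [hγdef]; linarith
      have hq1 : 0 ≤ 2*B/γ := div_nonneg (by positivity) hγ.le
      have hq2 : (0:ℝ) ≤ (2*L/γ)^2 := sq_nonneg _
      have hKnn : 0 ≤ L^2 + B^2 * ((2*B/γ + 2) * (2*L/γ)^2) := by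
        have h1 := mul_nonneg (sq_nonneg B)
          (mul_nonneg (by linarith : (0:ℝ) ≤ 2*B/γ + 2) hq2)
        nlinarith [sq_nonneg L]
      refine ⟨L^2 + B^2 * ((2*B/γ + 2) * (2*L/γ)^2), hKnn, ?_⟩
      intro T
      -- pointwise bound by indicator
      have hpt : ∀ t, 1 ≤ t → E i t ≤ L^2 * d t ^ 2
          + B^2 * (if 0 < max (R (t-1) i) 0 then (1:ℝ) else 0) := by
        intro t ht
        by_cases hp : 0 < max (R (t-1) i) 0
        · rw [if_pos hp]
          have h1 := hEA i t ht
          have h2 := hBb t ht i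
          have h3 : (r t i)^2 ≤ B^2 := by nlinarith [abs_nonneg (r t i), sq_abs (r t i)]
          have h4 : 0 ≤ L^2 * d t ^2 := by positivity
          linarith
        · rw [if_neg hp]
          have hmax0 : max (R (t-1) i) 0 = 0 := by
            have := le_max_right (R (t-1) i) 0
            linarith [not_lt.1 hp]
          have hRneg : R (t-1) i ≤ 0 := by
            by_contra hcon
            push_neg at hcon
            rw [max_eq_left hcon.le] at hmax0
            linarith
          have hR := hRrec t ht i
          have hcb : max (R t i) 0 ^2 ≤ max (r t i) 0 ^2 := by
            rw [hR]; exact rtrm_coordB _ _ hRneg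
          have hrle : r t i ≤ L * d t := by
            have h5 := (abs_le.1 (hlip t ht i)).2
            linarith [hrh i]
          have hmr : max (r t i) 0 ≤ L * d t := max_le hrle (mul_nonneg hL.le (hd0 t))
          have hmr0 : (0:ℝ) ≤ max (r t i) 0 := le_max_right _ _
          have hsq : max (r t i) 0 ^2 ≤ (L * d t)^2 := by nlinarith
          rw [hE, hmax0]
          have h0 : (L * d t)^2 = L^2 * d t^2 := by ring
          nlinarith
      -- counting bad steps
      have hcount := rtrm_counting (fun t => max (R t i) 0) (fun t => ¬ (L * d t ≤ γ/2)) γ B hγ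
        hB.le
        (by show max (R 0 i) 0 = 0; rw [hR0]; simp)
        (fun t => le_max_right _ _)
        (by
          intro t ht
          constructor
          · intro _
            show max (R t i) 0 ≤ max (R (t-1) i) 0 + B
            have hR := hRrec t ht i
            have hrb : r t i ≤ B := (abs_le.1 (hBb t ht i)).2
            apply max_le _ (by positivity)
            rw [hR]
            have := le_max_left (R (t-1) i) 0
            linarith
          · intro hg
            show max (R t i) 0 ≤ max (max (R (t-1) i) 0 - γ/2) 0
            push_neg at hg
            have hlip2 := (abs_le.1 (hlip t ht i)).2
            have hrle : r t i ≤ -(γ/2) := by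
              rw [hγdef] at hg ⊢
              linarith
            have hR := hRrec t ht i
            apply max_le_max _ le_rfl
            rw [hR]
            have := le_max_left (R (t-1) i) 0
            linarith) T
      have hbadb : ∑ t ∈ Icc 1 T, (if ¬ (L * d t ≤ γ/2) then (1:ℝ) else 0)
          ≤ (2*L/γ)^2 * ∑ t ∈ Icc 1 T, d t ^2 := by
        rw [Finset.mul_sum]
        apply Finset.sum_le_sum
        intro t _
        by_cases hbad : L * d t ≤ γ/2
        · rw [if_neg (by simpa using hbad)]
          positivity
        · rw [if_pos hbad]
          push_neg at hbad
          have h1 : γ ≤ 2*L*d t := by linarith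
          have h2 : γ^2 ≤ (2*L*d t)^2 := by nlinarith
          have h3 : (2*L/γ)^2 * d t^2 = (2*L*d t)^2/γ^2 := by
            field_simp
          rw [h3, le_div_iff₀ (by positivity)]
          linarith
      calc ∑ t ∈ Icc 1 T, E i t
          ≤ ∑ t ∈ Icc 1 T, (L^2 * d t ^2
            + B^2 * (if 0 < max (R (t-1) i) 0 then (1:ℝ) else 0)) := by
            apply Finset.sum_le_sum
            intro t ht
            exact hpt t (Finset.mem_Icc.1 ht).1
        _ = L^2 * (∑ t ∈ Icc 1 T, d t^2)
            + B^2 * ∑ t ∈ Icc 1 T, (if 0 < max (R (t-1) i) 0 then (1:ℝ) else 0) := by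
            rw [Finset.sum_add_distrib, ← Finset.mul_sum, ← Finset.mul_sum]
        _ ≤ L^2 * (∑ t ∈ Icc 1 T, d t^2)
            + B^2 * ((2*B/γ + 2) * ∑ t ∈ Icc 1 T, (if ¬ (L * d t ≤ γ/2) then (1:ℝ) else 0)) := by
            have := mul_le_mul_of_nonneg_left hcount (sq_nonneg B)
            linarith
        _ ≤ L^2 * (∑ t ∈ Icc 1 T, d t^2)
            + B^2 * ((2*B/γ + 2) * ((2*L/γ)^2 * ∑ t ∈ Icc 1 T, d t ^2)) := by
            have h5 := mul_le_mul_of_nonneg_left hbadb (by linarith : (0:ℝ) ≤ 2*B/γ + 2)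
            have := mul_le_mul_of_nonneg_left h5 (sq_nonneg B)
            linarith
        _ = (L^2 + B^2 * ((2*B/γ + 2) * (2*L/γ)^2)) * ∑ t ∈ Icc 1 T, d t ^2 := by ring
    · -- non-margin coordinate: rh i = 0
      have hrh0 : rh i = 0 := le_antisymm (hrh i) (not_lt.1 hm)
      refine ⟨L^2, by positivity, ?_⟩
      intro T
      rw [Finset.mul_sum]
      apply Finset.sum_le_sum
      intro t ht
      obtain ⟨ht1, _⟩ := Finset.mem_Icc.1 ht
      have h1 := hEA i t ht1
      have h2 := hlip t ht1 i
      rw [hrh0, sub_zero] at h2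
      have h3 : (r t i)^2 ≤ (L * d t)^2 := by
        nlinarith [abs_nonneg (r t i), sq_abs (r t i), hd0 t]
      calc E i t ≤ (r t i)^2 := h1
        _ ≤ (L * d t)^2 := h3
        _ = L^2 * d t^2 := by ring
  -- Step 3: assemble
  choose K hK0 hK using hcoord
  have hKsum : 0 ≤ ∑ i, K i := Finset.sum_nonneg fun i _ => hK0 i
  refine ⟨(∑ i, K i) + 1, by linarith, ?_⟩
  intro T
  have hD0 : 0 ≤ ∑ t ∈ Icc 1 T, d t ^2 := Finset.sum_nonneg fun t _ => sq_nonneg _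
  calc ∑ i, max (R T i) 0 ^ 2 = ∑ i, ∑ t ∈ Icc 1 T, E i t := hΦsum T
    _ ≤ ∑ i, K i * ∑ t ∈ Icc 1 T, d t ^2 := Finset.sum_le_sum fun i _ => hK i T
    _ = (∑ i, K i) * ∑ t ∈ Icc 1 T, d t ^2 := by rw [Finset.sum_mul]
    _ ≤ ((∑ i, K i) + 1) * ∑ t ∈ Icc 1 T, d t ^2 := by nlinarith

end RTRMAux5

/-- Best-iterate convergence of RTRM in an SCCP. -/
theorem rtrm_best_iterate
    {n m : ℕ} (hn : 0 < n) (hm : 0 < m)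
    (U : Matrix (Fin n) (Fin m) ℝ) (μ : ℝ) (hμ : 0 < μ)
    (xr : Fin n → ℝ) (yr : Fin m → ℝ)
    (hxr : xr ∈ stdSimplex ℝ (Fin n)) (hyr : yr ∈ stdSimplex ℝ (Fin m))
    (xh : Fin n → ℝ) (yh : Fin m → ℝ)
    (hsad : IsSaddle U μ xr yr xh yh)
    (x : ℕ → Fin n → ℝ) (y : ℕ → Fin m → ℝ)
    (Rx : ℕ → Fin n → ℝ) (Ry : ℕ → Fin m → ℝ)
    (hx1 : x 1 ∈ stdSimplex ℝ (Fin n)) (hy1 : y 1 ∈ stdSimplex ℝ (Fin m))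
    (hRx0 : Rx 0 = 0) (hRy0 : Ry 0 = 0)
    (hRx : ∀ t : ℕ, 1 ≤ t →
      Rx t = fun i => Rx (t - 1) i + imRegret (lossX U μ xr (x t) (y t)) (x t) i)
    (hRy : ∀ t : ℕ, 1 ≤ t →
      Ry t = fun j => Ry (t - 1) j + imRegret (lossY U μ yr (x t) (y t)) (y t) j)
    (hxu : ∀ t : ℕ, 1 ≤ t →
      x (t + 1) = if 0 < ∑ i, max (Rx t i) 0 then (fun i => max (Rx t i) 0 / ∑ i', max (Rx t i') 0)
        else fun _ => 1 / (n : ℝ))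
    (hyu : ∀ t : ℕ, 1 ≤ t →
      y (t + 1) = if 0 < ∑ j, max (Ry t j) 0 then (fun j => max (Ry t j) 0 / ∑ j', max (Ry t j') 0)
        else fun _ => 1 / (m : ℝ)) :
    ∃ C : ℝ, 0 < C ∧ ∀ T : ℕ, 1 ≤ T → ∃ t : ℕ, 1 ≤ t ∧ t ≤ T ∧
      pnorm (xh - x t) (yh - y t) ≤ C / Real.sqrt T := by
  classical
  obtain ⟨hxhS, hyhS, hsadX, hsadY⟩ := hsad
  have hsad' : IsSaddle U μ xr yr xh yh := ⟨hxhS, hyhS, hsadX, hsadY⟩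
  -- constants
  set SU : ℝ := ∑ i', ∑ j', |U i' j'| with hSUdef
  have hSU0 : 0 ≤ SU := Finset.sum_nonneg fun i' _ => Finset.sum_nonneg fun j' _ => abs_nonneg _
  set L : ℝ := (SU + μ) * ((n:ℝ) + (m:ℝ) + 2) + 1 with hLdef
  have hL : 0 < L := by
    have h1 : 0 ≤ (SU + μ) * ((n:ℝ) + (m:ℝ) + 2) := by
      apply mul_nonneg (by linarith) (by positivity)
    simp only [hLdef]; linarith
  set B : ℝ := 2 * (SU + μ) + 1 with hBdef
  have hB : 0 < B := by simp only [hBdef]; linarith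
  -- iterates stay in the simplex
  have hxs : ∀ t, 1 ≤ t → x t ∈ stdSimplex ℝ (Fin n) := by
    intro t ht
    rcases Nat.lt_or_ge t 2 with h2 | h2
    · have h1 : t = 1 := by omega
      rw [h1]; exact hx1
    · obtain ⟨s, rfl⟩ : ∃ s, t = s + 1 := ⟨t - 1, by omega⟩
      have hs : 1 ≤ s := by omega
      rw [hxu s hs]
      exact rtrm_update_mem_simplex hn _
  have hys : ∀ t, 1 ≤ t → y t ∈ stdSimplex ℝ (Fin m) := by
    intro t ht
    rcases Nat.lt_or_ge t 2 with h2 | h2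
    · have h1 : t = 1 := by omega
      rw [h1]; exact hy1
    · obtain ⟨s, rfl⟩ : ∃ s, t = s + 1 := ⟨t - 1, by omega⟩
      have hs : 1 ≤ s := by omega
      rw [hyu s hs]
      exact rtrm_update_mem_simplex hm _
  -- the distance sequence
  set dseq : ℕ → ℝ := fun t => Real.sqrt (sqnorm (xh - x t) + sqnorm (yh - y t)) with hdseq
  have hd0 : ∀ t, 0 ≤ dseq t := fun t => Real.sqrt_nonneg _
  have hdsq : ∀ t, dseq t ^ 2 = sqnorm (xh - x t) + sqnorm (yh - y t) := by
    intro t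
    simp only [hdseq]
    exact Real.sq_sqrt (add_nonneg (rtrm_sqnorm_nonneg _) (rtrm_sqnorm_nonneg _))
  -- player-wise recursions
  have hRrecx : ∀ t, 1 ≤ t → ∀ i, Rx t i
      = Rx (t-1) i + imRegret (lossX U μ xr (x t) (y t)) (x t) i := by
    intro t ht i
    exact congrFun (hRx t ht) i
  have hRrecy : ∀ t, 1 ≤ t → ∀ j, Ry t j
      = Ry (t-1) j + imRegret (lossY U μ yr (x t) (y t)) (y t) j := by
    intro t ht j
    exact congrFun (hRy t ht) j
  -- the cross terms vanish
  have hmulx : ∀ t, 1 ≤ t → ∀ i, max (Rx (t-1) i) 0 = (∑ i', max (Rx (t-1) i') 0) * x t i := by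
    intro t ht i
    rcases Nat.lt_or_ge t 2 with h2 | h2
    · have h1 : t = 1 := by omega
      subst h1
      simp [hRx0]
    · obtain ⟨s, rfl⟩ : ∃ s, t = s + 1 := ⟨t - 1, by omega⟩
      have hs : 1 ≤ s := by omega
      have hts : s + 1 - 1 = s := by omega
      rw [hts]
      by_cases hpos : 0 < ∑ i', max (Rx s i') 0
      · rw [hxu s hs, if_pos hpos]
        rw [mul_comm, div_mul_cancel₀ _ (ne_of_gt hpos)]
      · have hz : ∑ i', max (Rx s i') 0 = 0 :=
          le_antisymm (not_lt.1 hpos) (Finset.sum_nonneg fun i' _ => le_max_right _ _)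
        have hzi : max (Rx s i) 0 = 0 :=
          (Finset.sum_eq_zero_iff_of_nonneg fun i' _ => le_max_right _ _).1 hz i
            (Finset.mem_univ i)
        rw [hzi, hz, zero_mul]
  have hmuly : ∀ t, 1 ≤ t → ∀ j, max (Ry (t-1) j) 0 = (∑ j', max (Ry (t-1) j') 0) * y t j := by
    intro t ht j
    rcases Nat.lt_or_ge t 2 with h2 | h2
    · have h1 : t = 1 := by omega
      subst h1
      simp [hRy0]
    · obtain ⟨s, rfl⟩ : ∃ s, t = s + 1 := ⟨t - 1, by omega⟩
      have hs : 1 ≤ s := by omega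
      have hts : s + 1 - 1 = s := by omega
      rw [hts]
      by_cases hpos : 0 < ∑ j', max (Ry s j') 0
      · rw [hyu s hs, if_pos hpos]
        rw [mul_comm, div_mul_cancel₀ _ (ne_of_gt hpos)]
      · have hz : ∑ j', max (Ry s j') 0 = 0 :=
          le_antisymm (not_lt.1 hpos) (Finset.sum_nonneg fun j' _ => le_max_right _ _)
        have hzj : max (Ry s j) 0 = 0 :=
          (Finset.sum_eq_zero_iff_of_nonneg fun j' _ => le_max_right _ _).1 hz j
            (Finset.mem_univ j)
        rw [hzj, hz, zero_mul]
  have hcrossx : ∀ t, 1 ≤ t →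
      ∑ i, max (Rx (t-1) i) 0 * imRegret (lossX U μ xr (x t) (y t)) (x t) i = 0 := by
    intro t ht
    exact rtrm_cross_zero _ _ _ (hxs t ht).2 (hmulx t ht)
  have hcrossy : ∀ t, 1 ≤ t →
      ∑ j, max (Ry (t-1) j) 0 * imRegret (lossY U μ yr (x t) (y t)) (y t) j = 0 := by
    intro t ht
    exact rtrm_cross_zero _ _ _ (hys t ht).2 (hmuly t ht)
  -- Lipschitz bounds
  have hlipx : ∀ t, 1 ≤ t → ∀ i,
      |imRegret (lossX U μ xr (x t) (y t)) (x t) i - imRegret (lossX U μ xr xh yh) xh i|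
        ≤ L * dseq t := by
    intro t ht i
    have h1 := rtrm_lipX U μ hμ.le hxr (hxs t ht) hxhS (hys t ht) hyhS i
    have h2 : (SU + μ) * ((n:ℝ) + 2) ≤ L := by
      have h3 : (SU + μ) * ((n:ℝ) + 2) ≤ (SU + μ) * ((n:ℝ) + (m:ℝ) + 2) := by
        apply mul_le_mul_of_nonneg_left _ (by linarith)
        have : (0:ℝ) ≤ (m:ℝ) := by positivity
        linarith
      simp only [hLdef]; linarith
    calc |imRegret (lossX U μ xr (x t) (y t)) (x t) i - imRegret (lossX U μ xr xh yh) xh i|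
        ≤ (SU + μ) * ((n:ℝ) + 2) * Real.sqrt (sqnorm (xh - x t) + sqnorm (yh - y t)) := h1
      _ ≤ L * dseq t := by
          apply mul_le_mul_of_nonneg_right h2 (Real.sqrt_nonneg _)
  have hlipy : ∀ t, 1 ≤ t → ∀ j,
      |imRegret (lossY U μ yr (x t) (y t)) (y t) j - imRegret (lossY U μ yr xh yh) yh j|
        ≤ L * dseq t := by
    intro t ht j
    have h1 := rtrm_lipY U μ hμ.le hyr (hys t ht) hyhS (hxs t ht) hxhS j
    have h2 : (SU + μ) * ((m:ℝ) + 2) ≤ L := by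
      have h3 : (SU + μ) * ((m:ℝ) + 2) ≤ (SU + μ) * ((n:ℝ) + (m:ℝ) + 2) := by
        apply mul_le_mul_of_nonneg_left _ (by linarith)
        have : (0:ℝ) ≤ (n:ℝ) := by positivity
        linarith
      simp only [hLdef]; linarith
    calc |imRegret (lossY U μ yr (x t) (y t)) (y t) j - imRegret (lossY U μ yr xh yh) yh j|
        ≤ (SU + μ) * ((m:ℝ) + 2) * Real.sqrt (sqnorm (xh - x t) + sqnorm (yh - y t)) := h1
      _ ≤ L * dseq t := by
          apply mul_le_mul_of_nonneg_right h2 (Real.sqrt_nonneg _)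
  -- uniform bounds on immediate regrets
  have hBbx : ∀ t, 1 ≤ t → ∀ i, |imRegret (lossX U μ xr (x t) (y t)) (x t) i| ≤ B := by
    intro t ht i
    have h1 := rtrm_imRegret_bound (lossX U μ xr (x t) (y t)) (x t) (hxs t ht) (SU + μ)
      (fun i' => rtrm_lossX_bound U μ hμ.le hxr (hxs t ht) (hys t ht) i') i
    simp only [hBdef]; linarith
  have hBby : ∀ t, 1 ≤ t → ∀ j, |imRegret (lossY U μ yr (x t) (y t)) (y t) j| ≤ B := by
    intro t ht j
    have h1 := rtrm_imRegret_bound (lossY U μ yr (x t) (y t)) (y t) (hys t ht) (SU + μ)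
      (fun j' => rtrm_lossY_bound U μ hμ.le hyr (hys t ht) (hxs t ht) j') j
    simp only [hBdef]; linarith
  -- Φ bounds for both players
  obtain ⟨Cx, hCx0, hCx⟩ := rtrm_player_phi_bound
    (fun t => imRegret (lossX U μ xr (x t) (y t)) (x t)) Rx
    (imRegret (lossX U μ xr xh yh) xh) dseq L B hL hB hRx0 hRrecx hcrossx
    (fun i => rtrm_kktX U μ hμ xr yr xh yh hsad' i) hlipx hBbx hd0
  obtain ⟨Cy, hCy0, hCy⟩ := rtrm_player_phi_bound
    (fun t => imRegret (lossY U μ yr (x t) (y t)) (y t)) Ry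
    (imRegret (lossY U μ yr xh yh) yh) dseq L B hL hB hRy0 hRrecy hcrossy
    (fun j => rtrm_kktY U μ hμ xr yr xh yh hsad' j) hlipy hBby hd0
  -- cumulative regrets as sums
  have hRxsum : ∀ T i, Rx T i = ∑ t ∈ Icc 1 T, imRegret (lossX U μ xr (x t) (y t)) (x t) i := by
    intro T i
    have htel := rtrm_teles (fun t => Rx t i) T
    have h0 : Rx 0 i = 0 := by rw [hRx0]; rfl
    rw [htel, h0, zero_add]
    refine Finset.sum_congr rfl fun t ht => ?_
    have h1 := hRrecx t (Finset.mem_Icc.1 ht).1 i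
    rw [h1]; ring
  have hRysum : ∀ T j, Ry T j = ∑ t ∈ Icc 1 T, imRegret (lossY U μ yr (x t) (y t)) (y t) j := by
    intro T j
    have htel := rtrm_teles (fun t => Ry t j) T
    have h0 : Ry 0 j = 0 := by rw [hRy0]; rfl
    rw [htel, h0, zero_add]
    refine Finset.sum_congr rfl fun t ht => ?_
    have h1 := hRrecy t (Finset.mem_Icc.1 ht).1 j
    rw [h1]; ring
  -- lower bound on the comparator regret via strong convexity
  have hkeylow : ∀ T, μ/2 * (∑ t ∈ Icc 1 T, dseq t ^2)
      ≤ (∑ i, xh i * Rx T i) + ∑ j, yh j * Ry T j := by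
    intro T
    have hQx : ∑ i, xh i * Rx T i
        = ∑ t ∈ Icc 1 T, ∑ i, xh i * imRegret (lossX U μ xr (x t) (y t)) (x t) i := by
      calc ∑ i, xh i * Rx T i
          = ∑ i, ∑ t ∈ Icc 1 T, xh i * imRegret (lossX U μ xr (x t) (y t)) (x t) i := by
            refine Finset.sum_congr rfl fun i _ => ?_
            rw [hRxsum T i, Finset.mul_sum]
        _ = _ := Finset.sum_comm
    have hQy : ∑ j, yh j * Ry T j
        = ∑ t ∈ Icc 1 T, ∑ j, yh j * imRegret (lossY U μ yr (x t) (y t)) (y t) j := by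
      calc ∑ j, yh j * Ry T j
          = ∑ j, ∑ t ∈ Icc 1 T, yh j * imRegret (lossY U μ yr (x t) (y t)) (y t) j := by
            refine Finset.sum_congr rfl fun j _ => ?_
            rw [hRysum T j, Finset.mul_sum]
        _ = _ := Finset.sum_comm
    rw [hQx, hQy, ← Finset.sum_add_distrib, Finset.mul_sum]
    apply Finset.sum_le_sum
    intro t ht
    have ht1 := (Finset.mem_Icc.1 ht).1
    have hsc := rtrm_sc_step U μ xr yr xh yh hsad' (x t) (y t) (hxs t ht1) (hys t ht1)
    have hconvx : ∑ i, xh i * imRegret (lossX U μ xr (x t) (y t)) (x t) i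
        = ∑ i, lossX U μ xr (x t) (y t) i * (x t i - xh i) := by
      simp only [imRegret]
      have e1 : ∀ i : Fin n, xh i * ((∑ i', lossX U μ xr (x t) (y t) i' * x t i')
          - lossX U μ xr (x t) (y t) i)
          = (∑ i', lossX U μ xr (x t) (y t) i' * x t i') * xh i
            - lossX U μ xr (x t) (y t) i * xh i := fun i => by ring
      have e2 : ∀ i : Fin n, lossX U μ xr (x t) (y t) i * (x t i - xh i)
          = lossX U μ xr (x t) (y t) i * x t i - lossX U μ xr (x t) (y t) i * xh i :=
        fun i => by ring
      rw [Finset.sum_congr rfl fun i _ => e1 i, Finset.sum_congr rfl fun i _ => e2 i,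
          Finset.sum_sub_distrib, Finset.sum_sub_distrib, ← Finset.mul_sum, hxhS.2, mul_one]
    have hconvy : ∑ j, yh j * imRegret (lossY U μ yr (x t) (y t)) (y t) j
        = ∑ j, lossY U μ yr (x t) (y t) j * (y t j - yh j) := by
      simp only [imRegret]
      have e1 : ∀ j : Fin m, yh j * ((∑ j', lossY U μ yr (x t) (y t) j' * y t j')
          - lossY U μ yr (x t) (y t) j)
          = (∑ j', lossY U μ yr (x t) (y t) j' * y t j') * yh j
            - lossY U μ yr (x t) (y t) j * yh j := fun j => by ring
      have e2 : ∀ j : Fin m, lossY U μ yr (x t) (y t) j * (y t j - yh j)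
          = lossY U μ yr (x t) (y t) j * y t j - lossY U μ yr (x t) (y t) j * yh j :=
        fun j => by ring
      rw [Finset.sum_congr rfl fun j _ => e1 j, Finset.sum_congr rfl fun j _ => e2 j,
          Finset.sum_sub_distrib, Finset.sum_sub_distrib, ← Finset.mul_sum, hyhS.2, mul_one]
    rw [hconvx, hconvy, hdsq t]
    exact hsc
  -- upper bound on the comparator regret via the potentials
  have hkeyupx : ∀ T, ∑ i, xh i * Rx T i
      ≤ Real.sqrt (Cx * ∑ t ∈ Icc 1 T, dseq t ^2) := by
    intro T
    have hΦ := hCx T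
    have hmaxle : ∀ i, max (Rx T i) 0 ≤ Real.sqrt (Cx * ∑ t ∈ Icc 1 T, dseq t ^2) := by
      intro i
      have h1 : max (Rx T i) 0 ^2 ≤ Cx * ∑ t ∈ Icc 1 T, dseq t ^2 := by
        have hs := Finset.single_le_sum (f := fun i' => max (Rx T i') 0 ^2)
          (fun i' _ => sq_nonneg _) (Finset.mem_univ i)
        linarith
      have h2 : max (Rx T i) 0 = Real.sqrt (max (Rx T i) 0 ^2) :=
        (Real.sqrt_sq (le_max_right _ _)).symm
      rw [h2]
      exact Real.sqrt_le_sqrt h1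
    calc ∑ i, xh i * Rx T i ≤ ∑ i, xh i * Real.sqrt (Cx * ∑ t ∈ Icc 1 T, dseq t ^2) := by
          apply Finset.sum_le_sum
          intro i _
          apply mul_le_mul_of_nonneg_left _ (hxhS.1 i)
          calc Rx T i ≤ max (Rx T i) 0 := le_max_left _ _
            _ ≤ _ := hmaxle i
      _ = Real.sqrt (Cx * ∑ t ∈ Icc 1 T, dseq t ^2) := by
          rw [← Finset.sum_mul, hxhS.2, one_mul]
  have hkeyupy : ∀ T, ∑ j, yh j * Ry T j
      ≤ Real.sqrt (Cy * ∑ t ∈ Icc 1 T, dseq t ^2) := by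
    intro T
    have hΦ := hCy T
    have hmaxle : ∀ j, max (Ry T j) 0 ≤ Real.sqrt (Cy * ∑ t ∈ Icc 1 T, dseq t ^2) := by
      intro j
      have h1 : max (Ry T j) 0 ^2 ≤ Cy * ∑ t ∈ Icc 1 T, dseq t ^2 := by
        have hs := Finset.single_le_sum (f := fun j' => max (Ry T j') 0 ^2)
          (fun j' _ => sq_nonneg _) (Finset.mem_univ j)
        linarith
      have h2 : max (Ry T j) 0 = Real.sqrt (max (Ry T j) 0 ^2) :=
        (Real.sqrt_sq (le_max_right _ _)).symm
      rw [h2]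
      exact Real.sqrt_le_sqrt h1
    calc ∑ j, yh j * Ry T j ≤ ∑ j, yh j * Real.sqrt (Cy * ∑ t ∈ Icc 1 T, dseq t ^2) := by
          apply Finset.sum_le_sum
          intro j _
          apply mul_le_mul_of_nonneg_left _ (hyhS.1 j)
          calc Ry T j ≤ max (Ry T j) 0 := le_max_left _ _
            _ ≤ _ := hmaxle j
      _ = Real.sqrt (Cy * ∑ t ∈ Icc 1 T, dseq t ^2) := by
          rw [← Finset.sum_mul, hyhS.2, one_mul]
  -- the total squared distance is uniformly bounded
  set Econ : ℝ := Real.sqrt Cx + Real.sqrt Cy with hEcon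
  have hE0 : 0 ≤ Econ := by positivity
  set Dstar : ℝ := (2 * Econ / μ)^2 with hDstar
  have hDstar0 : 0 ≤ Dstar := sq_nonneg _
  have hDbound : ∀ T, ∑ t ∈ Icc 1 T, dseq t ^2 ≤ Dstar := by
    intro T
    set D : ℝ := ∑ t ∈ Icc 1 T, dseq t ^2 with hD
    have hD0 : 0 ≤ D := Finset.sum_nonneg fun t _ => sq_nonneg _
    have hkey : μ/2 * D ≤ Econ * Real.sqrt D := by
      have h1 := hkeylow T
      have h2 := hkeyupx T
      have h3 := hkeyupy T
      have h4 : Real.sqrt (Cx * D) = Real.sqrt Cx * Real.sqrt D := Real.sqrt_mul hCx0.le D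
      have h5 : Real.sqrt (Cy * D) = Real.sqrt Cy * Real.sqrt D := Real.sqrt_mul hCy0.le D
      simp only [hEcon]
      rw [add_mul]
      rw [hD] at *
      linarith [h2, h3]
    set s : ℝ := Real.sqrt D with hsdef
    have hs0 : 0 ≤ s := Real.sqrt_nonneg _
    have hssq : s^2 = D := Real.sq_sqrt hD0
    have hs2 : s ≤ 2 * Econ / μ := by
      by_contra hcon
      push_neg at hcon
      have hspos : 0 < s := lt_of_le_of_lt (by positivity) hcon
      rw [div_lt_iff₀ hμ] at hcon
      have h6 : Econ * s < (μ/2 * s) * s := by nlinarith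
      rw [← hssq] at hkey
      nlinarith
    calc D = s^2 := hssq.symm
      _ ≤ (2 * Econ / μ)^2 := by nlinarith
  -- conclusion
  refine ⟨Real.sqrt Dstar + 1, by positivity, ?_⟩
  intro T hT
  have hTpos : (0:ℝ) < (T:ℝ) := by exact_mod_cast Nat.pos_of_ne_zero (by omega)
  have hne : (Finset.Icc 1 T).Nonempty := ⟨1, Finset.mem_Icc.2 ⟨le_refl 1, hT⟩⟩
  have hcard : (Finset.Icc 1 T).card = T := by rw [Nat.card_Icc]; omega
  have hsum : ∑ t ∈ Icc 1 T, dseq t ^2 ≤ ∑ t ∈ Icc 1 T, Dstar / T := by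
    rw [Finset.sum_const, hcard, nsmul_eq_mul]
    have heq : (T:ℝ) * (Dstar / T) = Dstar := by field_simp
    rw [heq]
    exact hDbound T
  obtain ⟨t, htmem, hle⟩ := Finset.exists_le_of_sum_le hne hsum
  obtain ⟨ht1, ht2⟩ := Finset.mem_Icc.1 htmem
  refine ⟨t, ht1, ht2, ?_⟩
  have hpn : pnorm (xh - x t) (yh - y t) = dseq t := rfl
  rw [hpn]
  calc dseq t = Real.sqrt (dseq t ^2) := (Real.sqrt_sq (hd0 t)).symm
    _ ≤ Real.sqrt (Dstar / T) := Real.sqrt_le_sqrt hle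
    _ = Real.sqrt Dstar / Real.sqrt T := Real.sqrt_div hDstar0 _
    _ ≤ (Real.sqrt Dstar + 1) / Real.sqrt T := by
        have hsT : 0 < Real.sqrt (T:ℝ) := Real.sqrt_pos.2 hTpos
        gcongr
        linarith
end

section
/- Let σ* = (x*, y*) be a Nash equilibrium of the game given by U, let μ > 0, let σ^r ∈ Δ^n × Δ^m be a reference profile, and let σ̂ = (x̂, ŷ) be a saddle point of the corresponding SCCP. Then ‖σ* − σ̂‖₂² ≤ ‖σ* − σ^r‖₂² − ‖σ^r − σ̂‖₂², where profiles are identified with vectors in ℝ^{n+m}. -/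
open Finset

lemma quad_coeff_nonneg (A B : ℝ)
    (h : ∀ t : ℝ, 0 < t → t ≤ 1 → 0 ≤ A * t + B * t ^ 2) : 0 ≤ A := by
  by_contra hA
  push_neg at hA
  have hB1 : (0:ℝ) < |B| + 1 := by positivity
  set t : ℝ := min 1 ((-A) / (2 * (|B| + 1))) with ht
  have ht0 : 0 < t := lt_min one_pos (div_pos (by linarith) (by positivity))
  have ht1 : t ≤ 1 := min_le_left _ _
  have h1 := h t ht0 ht1
  have h2 : 0 ≤ A + B * t := by nlinarith
  have h3 : t ≤ (-A) / (2 * (|B| + 1)) := min_le_right _ _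
  have h4 : B * t ≤ |B| * t := mul_le_mul_of_nonneg_right (le_abs_self B) ht0.le
  have h5 : |B| * t ≤ |B| * ((-A) / (2 * (|B| + 1))) :=
    mul_le_mul_of_nonneg_left h3 (abs_nonneg B)
  have h6 : |B| * ((-A) / (2 * (|B| + 1))) ≤ (-A) / 2 := by
    rw [mul_div_assoc', div_le_div_iff₀ (by positivity) (by norm_num)]
    nlinarith [abs_nonneg B]
  linarith

lemma sqnorm_sub_comm {k : ℕ} (a b : Fin k → ℝ) : sqnorm (a - b) = sqnorm (b - a) := by
  unfold sqnorm
  exact Finset.sum_congr rfl fun i _ => by simp [Pi.sub_apply]; ring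

lemma sqnorm_seg_expand {k : ℕ} (q p r : Fin k → ℝ) (t : ℝ) :
    sqnorm ((1 - t) • q + t • p - r) =
      sqnorm (q - r) + (2 * t) * (∑ i, (q i - r i) * (p i - q i)) + t ^ 2 * sqnorm (p - q) := by
  unfold sqnorm
  rw [Finset.mul_sum, Finset.mul_sum, ← Finset.sum_add_distrib, ← Finset.sum_add_distrib]
  refine Finset.sum_congr rfl fun i _ => ?_
  simp only [Pi.add_apply, Pi.sub_apply, Pi.smul_apply, smul_eq_mul]
  ring

/-- Strong-convexity gap for a minimizer of a linear-plus-quadratic function over the simplex. -/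
lemma seg_min {k : ℕ} (φ : (Fin k → ℝ) → ℝ)
    (hφ : ∀ (s t : ℝ) (a b : Fin k → ℝ), φ (s • a + t • b) = s * φ a + t * φ b)
    (r p q : Fin k → ℝ) (c : ℝ) (hc : 0 ≤ c)
    (hq : q ∈ stdSimplex ℝ (Fin k)) (hp : p ∈ stdSimplex ℝ (Fin k))
    (hmin : ∀ z ∈ stdSimplex ℝ (Fin k),
      φ q + c * sqnorm (q - r) ≤ φ z + c * sqnorm (z - r)) :
    φ q + c * sqnorm (q - r) + c * sqnorm (p - q) ≤ φ p + c * sqnorm (p - r) := by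
  set A : ℝ := (φ p - φ q) + 2 * c * (∑ i, (q i - r i) * (p i - q i)) with hA
  set B : ℝ := c * sqnorm (p - q) with hB
  have expand : ∀ t : ℝ, φ ((1 - t) • q + t • p) + c * sqnorm ((1 - t) • q + t • p - r)
      = φ q + c * sqnorm (q - r) + A * t + B * t ^ 2 := by
    intro t
    rw [hφ, sqnorm_seg_expand]
    simp only [hA, hB]
    ring
  have hquad : ∀ t : ℝ, 0 < t → t ≤ 1 → 0 ≤ A * t + B * t ^ 2 := by
    intro t ht0 ht1
    have hz : (1 - t) • q + t • p ∈ stdSimplex ℝ (Fin k) :=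
      convex_stdSimplex ℝ (Fin k) hq hp (by linarith) ht0.le (by ring)
    have := hmin _ hz
    rw [expand t] at this
    linarith
  have hA0 : 0 ≤ A := quad_coeff_nonneg A B hquad
  have e1 := expand 1
  have hseg : (1 - (1:ℝ)) • q + (1:ℝ) • p = p := by
    simp
  rw [hseg] at e1
  have : φ p + c * sqnorm (p - r) = φ q + c * sqnorm (q - r) + A + B := by
    have := e1; linarith [this]
  simp only [hB] at this ⊢
  linarith

lemma payoff_left_lin {k l : ℕ} (U : Matrix (Fin k) (Fin l) ℝ) (y : Fin l → ℝ)
    (s t : ℝ) (a b : Fin k → ℝ) :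
    payoff U (s • a + t • b) y = s * payoff U a y + t * payoff U b y := by
  unfold payoff
  rw [Finset.mul_sum, Finset.mul_sum, ← Finset.sum_add_distrib]
  refine Finset.sum_congr rfl fun i _ => ?_
  rw [Finset.mul_sum, Finset.mul_sum, ← Finset.sum_add_distrib]
  refine Finset.sum_congr rfl fun j _ => ?_
  simp only [Pi.add_apply, Pi.smul_apply, smul_eq_mul]
  ring

lemma payoff_right_lin {k l : ℕ} (U : Matrix (Fin k) (Fin l) ℝ) (x : Fin k → ℝ)
    (s t : ℝ) (a b : Fin l → ℝ) :
    payoff U x (s • a + t • b) = s * payoff U x a + t * payoff U x b := by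
  unfold payoff
  rw [Finset.mul_sum, Finset.mul_sum, ← Finset.sum_add_distrib]
  refine Finset.sum_congr rfl fun i _ => ?_
  rw [Finset.mul_sum, Finset.mul_sum, ← Finset.sum_add_distrib]
  refine Finset.sum_congr rfl fun j _ => ?_
  simp only [Pi.add_apply, Pi.smul_apply, smul_eq_mul]
  ring

/-- Squared-distance inequality between NE, reference strategy and SCCP saddle point. -/
theorem saddle_sq_dist_bound
    {n m : ℕ} (hn : 0 < n) (hm : 0 < m)
    (U : Matrix (Fin n) (Fin m) ℝ) (μ : ℝ) (hμ : 0 < μ)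
    (xs : Fin n → ℝ) (ys : Fin m → ℝ) (hNE : IsNash U xs ys)
    (xr : Fin n → ℝ) (yr : Fin m → ℝ)
    (hxr : xr ∈ stdSimplex ℝ (Fin n)) (hyr : yr ∈ stdSimplex ℝ (Fin m))
    (xh : Fin n → ℝ) (yh : Fin m → ℝ)
    (hsad : IsSaddle U μ xr yr xh yh) :
    sqnorm (xs - xh) + sqnorm (ys - yh) ≤
      (sqnorm (xs - xr) + sqnorm (ys - yr)) - (sqnorm (xr - xh) + sqnorm (yr - yh)) := by
  obtain ⟨hxs, hys, hNx, hNy⟩ := hNE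
  obtain ⟨hxh, hyh, hSy, hSx⟩ := hsad
  have hc : (0:ℝ) ≤ μ / 2 := by linarith
  -- x-side strong convexity
  have hX := seg_min (fun x => -(payoff U x yh))
    (fun s t a b => by simp only [payoff_left_lin]; ring)
    xr xs xh (μ / 2) hc hxh hxs
    (fun z hz => by
      have := hSx z hz
      simp only [sccpObj] at this
      linarith)
  -- y-side strong convexity
  have hY := seg_min (fun y => payoff U xh y)
    (fun s t a b => by simp only [payoff_right_lin])
    yr ys yh (μ / 2) hc hyh hys
    (fun z hz => by
      have := hSy z hz
      simp only [sccpObj] at this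
      linarith)
  -- Nash inequality
  have hZ : payoff U xh ys ≤ payoff U xs yh := le_trans (hNx xh hxh) (hNy yh hyh)
  have hsum : μ / 2 * (sqnorm (xs - xh) + sqnorm (ys - yh)) ≤
      μ / 2 * ((sqnorm (xs - xr) + sqnorm (ys - yr)) - (sqnorm (xh - xr) + sqnorm (yh - yr))) := by
    linarith
  have hfin := le_of_mul_le_mul_left
    (by linarith : μ / 2 * (sqnorm (xs - xh) + sqnorm (ys - yh)) ≤
      μ / 2 * ((sqnorm (xs - xr) + sqnorm (ys - yr)) - (sqnorm (xh - xr) + sqnorm (yh - yr))))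
    (by linarith : (0:ℝ) < μ / 2)
  rw [sqnorm_sub_comm xr xh, sqnorm_sub_comm yr yh]
  linarith
end
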